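/- Fix μ ∈ ℝ, σ > 0, c ∈ ℝ, τ > 0 and q ∈ ℝ. For every t > 0, the map t ↦ F(t, τ, q; μ, σ, c) is differentiable at t with derivative equal to -((μ - c)/(σ²√τ)) · t^{-3/2} · φ(√(tτ)(q - c) + (μ - c)/(σ²√(tτ))). In particular, the hitting-time density f(t | q) := -dF/dt equals ((μ - c)/(σ²√τ)) · t^{-3/2} · φ(√(tτ)(q - c) + (μ - c)/(σ²√(tτ))). -/

import Mathlib

open Real MeasureTheory Filter Topology

/-- Standard normal density φ(x) = exp(-x²/2)/√(2π). -/
noncomputable def stdPdf (x : ℝ) : ℝ := Real.exp (-(x ^ 2) / 2) / Real.sqrt (2 * Real.pi)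

/-- Standard normal CDF Φ(x) = ∫_{-∞}^x φ(u) du. -/
noncomputable def stdCdf (x : ℝ) : ℝ := ∫ u in Set.Iio x, stdPdf u

/-- Survival probability F(t, τ, q; μ, σ, c): the probability that the agent's
reputation does not hit the cost c before time t, given true quality q. -/
noncomputable def survF (t τ q μ σ c : ℝ) : ℝ :=
  stdCdf (Real.sqrt (t * τ) * (q - c) + (μ - c) / (σ ^ 2 * Real.sqrt (t * τ)))
    - Real.exp (-(2 / σ ^ 2) * (μ - c) * (q - c)) *
      stdCdf (Real.sqrt (t * τ) * (q - c) - (μ - c) / (σ ^ 2 * Real.sqrt (t * τ)))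

/-
Write the two arguments of Φ in `survF` as `u + v` and `u - v` with `u = √(tτ)(q - c)` and
`v = (μ - c)/(σ²√(tτ))`. Since `u v = (μ - c)(q - c)/σ²` does not depend on `t`, the Gaussian identity
`e^{-2uv} φ(u - v) = φ(u + v)` makes the two terms of `dF/dt` share the factor `φ(u + v)`, and the
`u'` contributions cancel, leaving `2 v' φ(u + v)`; finally `v` is a multiple of `t^{-1/2}`.
-/

lemma continuous_stdPdf : Continuous stdPdf := by
  unfold stdPdf
  fun_prop

lemma integrable_stdPdf : Integrable stdPdf := by
  refine ((integrable_exp_neg_mul_sq (by norm_num : (0 : ℝ) < 1 / 2)).div_const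
    √(2 * π)).congr (Eventually.of_forall fun u => ?_)
  unfold stdPdf
  ring_nf

lemma stdCdf_eq_add_intervalIntegral (x : ℝ) :
    stdCdf x = stdCdf 0 + ∫ u in (0 : ℝ)..x, stdPdf u := by
  rw [← intervalIntegral.integral_Iic_sub_Iic integrable_stdPdf.integrableOn
    integrable_stdPdf.integrableOn, stdCdf, stdCdf, ← integral_Iic_eq_integral_Iio,
    ← integral_Iic_eq_integral_Iio]
  ring

lemma hasDerivAt_stdCdf (x : ℝ) : HasDerivAt stdCdf (stdPdf x) x := by
  rw [funext stdCdf_eq_add_intervalIntegral]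
  exact (intervalIntegral.integral_hasDerivAt_right integrable_stdPdf.intervalIntegrable
    continuous_stdPdf.aestronglyMeasurable.stronglyMeasurableAtFilter
    continuous_stdPdf.continuousAt).const_add _

lemma stdPdf_add_eq_exp_mul_stdPdf_sub (u v : ℝ) :
    stdPdf (u + v) = exp (-(2 * (u * v))) * stdPdf (u - v) := by
  unfold stdPdf
  rw [mul_div_assoc', ← exp_add]
  ring_nf

lemma hasDerivAt_stdCdf_add_sub_exp_mul_stdCdf_sub {u v : ℝ → ℝ} {v' t : ℝ}
    (hu : DifferentiableAt ℝ u t) (hv : HasDerivAt v v' t) :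
    HasDerivAt (fun s => stdCdf (u s + v s) - exp (-(2 * (u t * v t))) * stdCdf (u s - v s))
      (2 * v' * stdPdf (u t + v t)) t := by
  have hadd := (hasDerivAt_stdCdf _).comp t (hu.hasDerivAt.add hv)
  have hsub := ((hasDerivAt_stdCdf _).comp t (hu.hasDerivAt.sub hv)).const_mul
    (exp (-(2 * (u t * v t))))
  refine (hadd.sub hsub).congr_deriv ?_
  simp only [Pi.add_apply, Pi.sub_apply]
  rw [stdPdf_add_eq_exp_mul_stdPdf_sub]
  ring

lemma hasDerivAt_div_mul_sqrt_mul (K L τ : ℝ) {t : ℝ} (ht : 0 < t) :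
    HasDerivAt (fun s => K / (L * √(s * τ))) (-(K / (L * √τ)) * t ^ (-(3 : ℝ) / 2) / 2) t := by
  have hrpow : HasDerivAt (fun s : ℝ => K / (L * √τ) * s ^ (-(1 : ℝ) / 2))
      (-(K / (L * √τ)) * t ^ (-(3 : ℝ) / 2) / 2) t := by
    refine ((hasDerivAt_rpow_const (p := -(1 : ℝ) / 2) (Or.inl ht.ne')).const_mul
      (K / (L * √τ))).congr_deriv ?_
    rw [show -(1 : ℝ) / 2 - 1 = -3 / 2 by norm_num]
    ring
  refine hrpow.congr_of_eventuallyEq (eventually_gt_nhds ht |>.mono fun s hs => ?_)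
  dsimp only
  rw [sqrt_mul hs.le, sqrt_eq_rpow, show -(1 : ℝ) / 2 = -(1 / 2) by ring, rpow_neg hs.le]
  field_simp

theorem stmt_12_general (μ σ c τ q : ℝ) (hτ : 0 < τ) (t : ℝ) (ht : 0 < t) :
    HasDerivAt (fun s : ℝ => survF s τ q μ σ c)
      (-((μ - c) / (σ ^ 2 * Real.sqrt τ)) * t ^ (-(3 : ℝ) / 2) *
        stdPdf (Real.sqrt (t * τ) * (q - c) + (μ - c) / (σ ^ 2 * Real.sqrt (t * τ)))) t := by
  have hu : DifferentiableAt ℝ (fun s => √(s * τ) * (q - c)) t := by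
    fun_prop (disch := positivity)
  have hprod :
      √(t * τ) * (q - c) * ((μ - c) / (σ ^ 2 * √(t * τ))) = (μ - c) * (q - c) / σ ^ 2 := by
    rw [mul_div_assoc', mul_right_comm, mul_comm (σ ^ 2), mul_assoc,
      mul_div_mul_left _ _ (by positivity)]
  have h := hasDerivAt_stdCdf_add_sub_exp_mul_stdCdf_sub hu
    (hasDerivAt_div_mul_sqrt_mul (μ - c) (σ ^ 2) τ ht)
  rw [hprod] at h
  convert h using 1
  · ext s
    simp only [survF]
    ring_nf
  · ring

/-- for t > 0 the survival probability is differentiable in t with derivative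
-((μ-c)/(σ²√τ)) · t^{-3/2} · φ(√(tτ)(q-c) + (μ-c)/(σ²√(tτ))); equivalently the hitting-time
density -dF/dt equals ((μ-c)/(σ²√τ)) · t^{-3/2} · φ(√(tτ)(q-c) + (μ-c)/(σ²√(tτ))). -/
theorem stmt_12 (μ σ c τ q : ℝ) (hσ : 0 < σ) (hτ : 0 < τ) (t : ℝ) (ht : 0 < t) :
    HasDerivAt (fun s : ℝ => survF s τ q μ σ c)
      (-((μ - c) / (σ ^ 2 * Real.sqrt τ)) * t ^ (-(3 : ℝ) / 2) *
        stdPdf (Real.sqrt (t * τ) * (q - c) + (μ - c) / (σ ^ 2 * Real.sqrt (t * τ)))) t :=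
  stmt_12_general μ σ c τ q hτ t ht
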